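/- arXiv:1907.03369 — 7 statements merged into one kernel-verified Lean document; each statement's English description precedes it below -/
import Mathlib

section
/- Let G be a finite abstract simplicial complex with connection matrix L (an integer square matrix indexed by the elements of G). Then det(L) = φ(G), the Fermi characteristic of G; equivalently, det(L) = (-1)^f where f is the number of simplices of G of even cardinality (odd dimension). In particular det(L) ∈ {1, -1}, so L is unimodular. -/
/-!
Let `B` be the incidence matrix `B(z, x) = [z ⊆ x]` of `G` and `D` the diagonal matrix of the
`ω(z)`. Entry `(x, y)` of `Bᵀ D B` is the sum of `ω` over the simplices contained in `x ∩ y`;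
since `G` is closed under nonempty subsets these are exactly the nonempty subsets of `x ∩ y`, and
that alternating sum is `1` or `0` according as `x ∩ y` is nonempty or not. Hence `L = Bᵀ D B`.
Ordering the simplices by cardinality makes `B` unitriangular, so `det L = det D = ∏ ω(x)`.
-/

open Finset BigOperators

variable {α : Type*} [DecidableEq α]

/-- A finite abstract simplicial complex: a finite collection of nonempty finite
sets closed under taking nonempty subsets. -/
def IsComplex (G : Finset (Finset α)) : Prop :=
  (∀ x ∈ G, x.Nonempty) ∧ ∀ x ∈ G, ∀ y : Finset α, y.Nonempty → y ⊆ x → y ∈ G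

/-- ω(x) = (-1)^(|x|-1). -/
def omegaS (x : Finset α) : ℤ := (-1) ^ (x.card - 1)

/-- The connection matrix over ℤ: L(x,y)=1 if x and y intersect, 0 otherwise. -/
def connL (G : Finset (Finset α)) : Matrix G G ℤ :=
  fun x y => if (x.1 ∩ y.1).Nonempty then 1 else 0

omit [DecidableEq α] in
lemma omegaS_of_ne_empty {z : Finset α} (hz : z ≠ ∅) : omegaS z = -(-1) ^ z.card := by
  obtain ⟨n, hn⟩ := Nat.exists_eq_add_one.mpr (card_pos.mpr (nonempty_iff_ne_empty.mpr hz))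
  simp [omegaS, hn, pow_succ]

omit [DecidableEq α] in
lemma omegaS_of_nonempty {z : Finset α} (hz : z.Nonempty) :
    omegaS z = if z.card % 2 = 0 then -1 else 1 := by
  rw [omegaS_of_ne_empty hz.ne_empty]
  split_ifs with h
  · simp [(Nat.even_iff.mpr h).neg_one_pow]
  · simp [(Nat.odd_iff.mpr (Nat.mod_two_ne_zero.mp h)).neg_one_pow]

lemma sum_omegaS_powerset_erase_empty (s : Finset α) :
    ∑ z ∈ s.powerset.erase ∅, omegaS z = if s.Nonempty then 1 else 0 := by
  have hω : ∀ z ∈ s.powerset.erase ∅, omegaS z = -(-1) ^ z.card :=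
    fun z hz => omegaS_of_ne_empty (ne_of_mem_erase hz)
  rw [sum_congr rfl hω, sum_neg_distrib,
    sum_erase_eq_sub (empty_mem_powerset s), sum_powerset_neg_one_pow_card]
  rcases s.eq_empty_or_nonempty with rfl | hs
  · simp
  · simp [hs, hs.ne_empty]

omit [DecidableEq α] in
lemma prod_omegaS_eq_neg_one_pow (G : Finset (Finset α)) (hG : ∀ x ∈ G, x.Nonempty) :
    ∏ x ∈ G, omegaS x = (-1) ^ (G.filter (fun x => x.card % 2 = 0)).card := by
  rw [prod_congr rfl fun x hx => omegaS_of_nonempty (hG x hx), prod_ite, prod_const, prod_const]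
  simp

lemma IsComplex.filter_subset_eq_powerset_erase_empty {G : Finset (Finset α)}
    (hG : IsComplex G) {s x : Finset α} (hx : x ∈ G) (hsx : s ⊆ x) :
    G.filter (· ⊆ s) = s.powerset.erase ∅ := by
  ext z
  simp only [mem_filter, mem_erase, mem_powerset, ← nonempty_iff_ne_empty]
  exact ⟨fun ⟨hz, hzs⟩ => ⟨hG.1 z hz, hzs⟩,
    fun ⟨hz, hzs⟩ => ⟨hG.2 x hx z hz (hzs.trans hsx), hzs⟩⟩

def subsetMatrix (G : Finset (Finset α)) : Matrix G G ℤ :=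
  fun z x => if z.1 ⊆ x.1 then 1 else 0

lemma det_subsetMatrix (G : Finset (Finset α)) : (subsetMatrix G).det = 1 := by
  have hB : (subsetMatrix G).BlockTriangular fun z => z.1.card := fun z x hlt => by
    simp only [subsetMatrix, ite_eq_right_iff, one_ne_zero, imp_false]
    exact fun hsub => (card_le_card hsub).not_gt hlt
  have hblock : ∀ k, (subsetMatrix G).toSquareBlock (fun z => z.1.card) k = 1 := by
    intro k
    ext ⟨i, hi⟩ ⟨j, hj⟩
    simp only [Matrix.toSquareBlock_def, Matrix.of_apply, Matrix.one_apply, subsetMatrix,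
      Subtype.mk.injEq]
    have : i.1 ⊆ j.1 ↔ i = j :=
      ⟨fun h => Subtype.ext (eq_of_subset_of_card_le h (hj.trans hi.symm).le),
        fun h => h ▸ subset_rfl⟩
    simp only [this]
  rw [hB.det, prod_eq_one fun k _ => by rw [hblock, Matrix.det_one]]

lemma connL_eq_transpose_mul_diagonal_mul {G : Finset (Finset α)} (hG : IsComplex G) :
    connL G = (subsetMatrix G).transpose * Matrix.diagonal (fun z : G => omegaS z.1) *
      subsetMatrix G := by
  ext x y
  have hterm : ∀ z : G, subsetMatrix G z x * omegaS z.1 * subsetMatrix G z y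
      = if z.1 ⊆ x.1 ∩ y.1 then omegaS z.1 else 0 := fun z => by
    by_cases hx : z.1 ⊆ x.1 <;> by_cases hy : z.1 ⊆ y.1 <;>
      simp [subsetMatrix, hx, hy, subset_inter_iff]
  rw [Matrix.mul_apply]
  simp only [Matrix.mul_diagonal, Matrix.transpose_apply, hterm]
  rw [sum_coe_sort G fun z => if z ⊆ x.1 ∩ y.1 then omegaS z else 0, ← sum_filter,
    hG.filter_subset_eq_powerset_erase_empty x.2 inter_subset_left,
    sum_omegaS_powerset_erase_empty]
  rfl

/-- Unimodularity theorem: det(L) equals the Fermi characteristic φ(G) = ∏ ω(x),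
equivalently (-1)^f where f is the number of simplices of even cardinality
(odd dimension). -/
theorem unimodularity (G : Finset (Finset α)) (hG : IsComplex G) :
    (connL G).det = ∏ x ∈ G, omegaS x ∧
    (connL G).det = (-1) ^ (G.filter (fun x => x.card % 2 = 0)).card := by
  have hdet : (connL G).det = ∏ x ∈ G, omegaS x := by
    rw [connL_eq_transpose_mul_diagonal_mul hG, Matrix.det_mul, Matrix.det_mul,
      Matrix.det_transpose, det_subsetMatrix, Matrix.det_diagonal, one_mul, mul_one]
    exact prod_coe_sort G omegaS
  exact ⟨hdet, hdet.trans (prod_omegaS_eq_neg_one_pow G hG.1)⟩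
end

section
/- For any finite abstract simplicial complex G, ∑_{x∈G} ω(x)·χ(S(x)) = 0, where S(x) is the unit sphere of x. -/
/-!
Let `altChainSum S = 1 - χ(S)` be the alternating count of all chains in `S`, the empty one
included. Sorting the nonempty chains by their largest, resp. smallest, element gives
`χ(G) = ∑ₓ altChainSum G_{<x} = ∑ₓ altChainSum G_{>x}`. A chain in `S(x)` is a chain in `G_{<x}`
followed by a chain in `G_{>x}`, so `altChainSum` of `S(x)` is the product of these two; and
`G_{<x}` is the boundary of the simplex `x`, on which `altChainSum` is `ω(x)` by induction on `x`.
As `ω(x)² = 1`, this gives `ω(x) χ(S(x)) = ω(x) - altChainSum G_{>x}`, and summing over `x` yields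
`χ(G) - χ(G) = 0`.
-/

open Finset BigOperators

variable {α : Type*} [DecidableEq α]

/-- The nonempty chains (subsets totally ordered by inclusion) of a finite
collection of finite sets. -/
def chainsOf (S : Finset (Finset α)) : Finset (Finset (Finset α)) :=
  S.powerset.filter (fun C => C.Nonempty ∧ ∀ a ∈ C, ∀ b ∈ C, a ⊆ b ∨ b ⊆ a)

/-- Euler characteristic of the simplicial complex whose simplices are the
nonempty chains in S: ∑_C (-1)^(|C|-1). -/
def chiChains (S : Finset (Finset α)) : ℤ :=
  ∑ C ∈ chainsOf S, (-1) ^ (C.card - 1)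

/-- The unit sphere of x in G: all simplices strictly contained in x or
strictly containing x. -/
def sphere (G : Finset (Finset α)) (x : Finset α) : Finset (Finset α) :=
  G.filter (fun y => y ⊂ x ∨ x ⊂ y)

def chains₀ (S : Finset (Finset α)) : Finset (Finset (Finset α)) :=
  S.powerset.filter (fun C => ∀ a ∈ C, ∀ b ∈ C, a ⊆ b ∨ b ⊆ a)

def altChainSum (S : Finset (Finset α)) : ℤ :=
  ∑ C ∈ chains₀ S, (-1) ^ C.card

lemma mem_chains₀ {S C : Finset (Finset α)} :
    C ∈ chains₀ S ↔ C ⊆ S ∧ ∀ a ∈ C, ∀ b ∈ C, a ⊆ b ∨ b ⊆ a := by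
  rw [chains₀, mem_filter, mem_powerset]

lemma mem_chainsOf {S C : Finset (Finset α)} :
    C ∈ chainsOf S ↔ C ⊆ S ∧ C.Nonempty ∧ ∀ a ∈ C, ∀ b ∈ C, a ⊆ b ∨ b ⊆ a := by
  rw [chainsOf, mem_filter, mem_powerset]

lemma chains₀_eq_insert_chainsOf (S : Finset (Finset α)) :
    chains₀ S = insert ∅ (chainsOf S) := by
  ext C
  rw [mem_insert, mem_chains₀, mem_chainsOf]
  rcases C.eq_empty_or_nonempty with rfl | hC
  · simp
  · simp [hC, hC.ne_empty]

lemma neg_one_pow_sub_one {n : ℕ} (hn : 1 ≤ n) : (-1 : ℤ) ^ (n - 1) = -(-1) ^ n := by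
  obtain ⟨m, rfl⟩ := Nat.exists_eq_add_of_le hn
  rw [Nat.add_sub_cancel_left, pow_add]
  ring

lemma altChainSum_eq_one_sub_chiChains (S : Finset (Finset α)) :
    altChainSum S = 1 - chiChains S := by
  have hempty : (∅ : Finset (Finset α)) ∉ chainsOf S := by simp [mem_chainsOf]
  rw [altChainSum, chains₀_eq_insert_chainsOf, sum_insert hempty, chiChains, card_empty,
    pow_zero, sub_eq_add_neg, ← sum_neg_distrib]
  congr 1
  refine sum_congr rfl fun C hC => ?_
  rw [neg_one_pow_sub_one (card_pos.mpr (mem_chainsOf.mp hC).2.1), neg_neg]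

lemma chains₀_filter_insert_mem_chainsOf {S C : Finset (Finset α)} {m : Finset α}
    {r : Finset α → Finset α → Prop} [DecidableRel r] (hr : ∀ a b, r a b → a ⊆ b ∨ b ⊆ a)
    (hm : m ∈ S) (hC : C ∈ chains₀ (S.filter (r · m))) : insert m C ∈ chainsOf S := by
  obtain ⟨hCS, hchain⟩ := mem_chains₀.mp hC
  have hcomp : ∀ y ∈ C, y ⊆ m ∨ m ⊆ y := fun y hy => hr y m (mem_filter.mp (hCS hy)).2
  refine mem_chainsOf.mpr ⟨insert_subset hm fun y hy => (mem_filter.mp (hCS hy)).1,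
    insert_nonempty m C, ?_⟩
  simp only [mem_insert, forall_eq_or_imp, subset_refl, true_or, true_and]
  exact ⟨fun b hb => (hcomp b hb).symm, fun a ha => ⟨hcomp a ha, hchain a ha⟩⟩

/-- Sort the nonempty chains by their `r`-top element. -/
lemma chiChains_eq_sum_altChainSum {S : Finset (Finset α)}
    (r : Finset α → Finset α → Prop) [DecidableRel r]
    (hr : ∀ a b, r a b → a ⊆ b ∨ b ⊆ a) (hr_asymm : ∀ a b, r a b → ¬ r b a)
    (htop : ∀ C ∈ chainsOf S, ∃ m ∈ C, ∀ y ∈ C, y ≠ m → r y m) :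
    chiChains S = ∑ m ∈ S, altChainSum (S.filter (r · m)) := by
  have hnotin : ∀ m ∈ S, ∀ C ∈ chains₀ (S.filter (r · m)), m ∉ C := fun m _ C hC hmC =>
    have hmm := (mem_filter.mp ((mem_chains₀.mp hC).1 hmC)).2
    hr_asymm m m hmm hmm
  simp only [altChainSum, sum_sigma']
  symm
  refine sum_bij (fun p _ => insert p.1 p.2) ?_ ?_ ?_ ?_
  · rintro ⟨m, C⟩ hp
    obtain ⟨hm, hC⟩ := mem_sigma.mp hp
    exact chains₀_filter_insert_mem_chainsOf hr hm hC
  · rintro ⟨m, C⟩ hp ⟨m', C'⟩ hp' heq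
    obtain ⟨hm, hC⟩ := mem_sigma.mp hp
    obtain ⟨hm', hC'⟩ := mem_sigma.mp hp'
    have hrel : ∀ {a b D}, D ∈ chains₀ (S.filter (r · b)) → a ≠ b → a ∈ insert b D → r a b :=
      fun hD hne hmem =>
        (mem_filter.mp ((mem_chains₀.mp hD).1 ((mem_insert.mp hmem).resolve_left hne))).2
    dsimp only at heq
    obtain rfl : m = m' := by
      by_contra hne
      exact hr_asymm m m' (hrel hC' hne (heq ▸ mem_insert_self m C))
        (hrel hC (Ne.symm hne) (heq ▸ mem_insert_self m' C'))
    rw [← erase_insert (hnotin m hm C hC), heq, erase_insert (hnotin m hm' C' hC')]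
  · intro D hD
    obtain ⟨m, hmD, hmtop⟩ := htop D hD
    obtain ⟨hDS, -, hchain⟩ := mem_chainsOf.mp hD
    refine ⟨⟨m, D.erase m⟩, mem_sigma.mpr ⟨hDS hmD, mem_chains₀.mpr ⟨fun y hy => ?_, ?_⟩⟩,
      insert_erase hmD⟩
    · exact mem_filter.mpr
        ⟨hDS (mem_of_mem_erase hy), hmtop y (mem_of_mem_erase hy) (ne_of_mem_erase hy)⟩
    · exact fun a ha b hb => hchain a (mem_of_mem_erase ha) b (mem_of_mem_erase hb)
  · rintro ⟨m, C⟩ hp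
    obtain ⟨hm, hC⟩ := mem_sigma.mp hp
    rw [card_insert_of_notMem (hnotin m hm C hC), Nat.add_sub_cancel]

lemma exists_top_of_mem_chainsOf {S C : Finset (Finset α)} (hC : C ∈ chainsOf S) :
    ∃ m ∈ C, ∀ y ∈ C, y ≠ m → y ⊂ m := by
  obtain ⟨-, hne, hchain⟩ := mem_chainsOf.mp hC
  obtain ⟨m, hm, hmax⟩ := exists_max_image C card hne
  refine ⟨m, hm, fun y hy hym => (hchain y hy m hm).elim (ssubset_of_subset_of_ne · hym) ?_⟩
  exact fun hmy => absurd (eq_of_subset_of_card_le hmy (hmax y hy)).symm hym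

lemma exists_bot_of_mem_chainsOf {S C : Finset (Finset α)} (hC : C ∈ chainsOf S) :
    ∃ m ∈ C, ∀ y ∈ C, y ≠ m → m ⊂ y := by
  obtain ⟨-, hne, hchain⟩ := mem_chainsOf.mp hC
  obtain ⟨m, hm, hmin⟩ := exists_min_image C card hne
  refine ⟨m, hm, fun y hy hym => (hchain m hm y hy).elim (ssubset_of_subset_of_ne · hym.symm) ?_⟩
  exact fun hym' => absurd (eq_of_subset_of_card_le hym' (hmin y hy)) hym

lemma chiChains_eq_sum_below (S : Finset (Finset α)) :
    chiChains S = ∑ m ∈ S, altChainSum (S.filter (· ⊂ m)) :=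
  chiChains_eq_sum_altChainSum (· ⊂ ·) (fun _ _ h => .inl h.subset)
    (fun _ _ h h' => h.asymm h') fun _ => exists_top_of_mem_chainsOf

lemma chiChains_eq_sum_above (S : Finset (Finset α)) :
    chiChains S = ∑ m ∈ S, altChainSum (S.filter (m ⊂ ·)) :=
  chiChains_eq_sum_altChainSum (fun y m => m ⊂ y) (fun _ _ h => .inr h.subset)
    (fun _ _ h h' => h.asymm h') fun _ => exists_bot_of_mem_chainsOf

lemma inter_mem_chains₀ {S C : Finset (Finset α)} (hC : C ∈ chains₀ S) (T : Finset (Finset α)) :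
    C ∩ T ∈ chains₀ T :=
  mem_chains₀.mpr ⟨inter_subset_right, fun a ha b hb =>
    (mem_chains₀.mp hC).2 a (mem_inter.mp ha).1 b (mem_inter.mp hb).1⟩

/-- The order complex of an ordinal sum `A ⊕ B` is the join of those of `A` and `B`. -/
lemma altChainSum_union {A B : Finset (Finset α)} (hAB : ∀ a ∈ A, ∀ b ∈ B, a ⊂ b) :
    altChainSum (A ∪ B) = altChainSum A * altChainSum B := by
  have hdisj : Disjoint A B :=
    disjoint_left.mpr fun a ha haB => (hAB a ha a haB).ne rfl
  rw [altChainSum, altChainSum, altChainSum, sum_mul_sum, ← sum_product']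
  refine sum_nbij' (fun C => (C ∩ A, C ∩ B)) (fun p => p.1 ∪ p.2) ?_ ?_ ?_ ?_ ?_
  · exact fun C hC => mem_product.mpr ⟨inter_mem_chains₀ hC A, inter_mem_chains₀ hC B⟩
  · rintro ⟨C₁, C₂⟩ hp
    obtain ⟨hC₁, hC₂⟩ := mem_product.mp hp
    obtain ⟨hC₁A, hchain₁⟩ := mem_chains₀.mp hC₁
    obtain ⟨hC₂B, hchain₂⟩ := mem_chains₀.mp hC₂
    refine mem_chains₀.mpr ⟨union_subset_union hC₁A hC₂B, ?_⟩
    simp only [mem_union]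
    rintro a (ha | ha) b (hb | hb)
    · exact hchain₁ a ha b hb
    · exact .inl (hAB a (hC₁A ha) b (hC₂B hb)).subset
    · exact .inr (hAB b (hC₁A hb) a (hC₂B ha)).subset
    · exact hchain₂ a ha b hb
  · intro C hC
    rw [← inter_union_distrib_left, inter_eq_left.mpr (mem_chains₀.mp hC).1]
  · rintro ⟨C₁, C₂⟩ hp
    simp only [mem_product, mem_chains₀] at hp
    obtain ⟨⟨hC₁A, -⟩, hC₂B, -⟩ := hp
    refine Prod.ext ?_ ?_ <;> dsimp only
    · rw [union_inter_distrib_right, inter_eq_left.mpr hC₁A,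
        disjoint_iff_inter_eq_empty.mp (hdisj.symm.mono_left hC₂B), union_empty]
    · rw [union_inter_distrib_right, inter_eq_left.mpr hC₂B,
        disjoint_iff_inter_eq_empty.mp (hdisj.mono_left hC₁A), empty_union]
  · intro C hC
    rw [← pow_add, ← card_union_of_disjoint (hdisj.mono inter_subset_right inter_subset_right),
      ← inter_union_distrib_left, inter_eq_left.mpr (mem_chains₀.mp hC).1]

lemma omegaS_eq_neg_neg_one_pow {β : Type*} {x : Finset β} (hx : x.Nonempty) :
    omegaS x = -(-1) ^ x.card :=
  neg_one_pow_sub_one (card_pos.mpr hx)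

lemma omegaS_mul_self {β : Type*} (x : Finset β) : omegaS x * omegaS x = 1 := by
  rw [omegaS, ← pow_add]
  exact Even.neg_one_pow ⟨_, rfl⟩

def properFaces (x : Finset α) : Finset (Finset α) :=
  x.ssubsets.erase ∅

lemma mem_properFaces {x y : Finset α} : y ∈ properFaces x ↔ y.Nonempty ∧ y ⊂ x := by
  rw [properFaces, mem_erase, mem_ssubsets, nonempty_iff_ne_empty]

lemma sum_omegaS_properFaces {x : Finset α} (hx : x.Nonempty) :
    ∑ y ∈ properFaces x, omegaS y = 1 + (-1) ^ x.card := by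
  have hpow : ∑ y ∈ x.powerset, (-1 : ℤ) ^ y.card = 0 := by
    rw [sum_powerset_neg_one_pow_card, if_neg hx.ne_empty]
  have hempty : ∅ ∈ x.ssubsets := mem_ssubsets.mpr (empty_ssubset.mpr hx)
  rw [sum_congr rfl fun y hy => omegaS_eq_neg_neg_one_pow (mem_properFaces.mp hy).1,
    sum_neg_distrib, properFaces, sum_erase_eq_sub hempty, ssubsets,
    sum_erase_eq_sub (mem_powerset_self x), hpow, card_empty, pow_zero]
  ring

lemma properFaces_filter_ssubset {x y : Finset α} (hy : y ⊂ x) :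
    (properFaces x).filter (· ⊂ y) = properFaces y := by
  ext z
  simp only [mem_filter, mem_properFaces]
  exact ⟨fun ⟨⟨hz, _⟩, hzy⟩ => ⟨hz, hzy⟩, fun ⟨hz, hzy⟩ => ⟨⟨hz, hzy.trans hy⟩, hzy⟩⟩

lemma altChainSum_properFaces {x : Finset α} (hx : x.Nonempty) :
    altChainSum (properFaces x) = omegaS x := by
  induction x using Finset.strongInduction with
  | _ x ih =>
    have hfaces : ∑ y ∈ properFaces x, altChainSum ((properFaces x).filter (· ⊂ y))
        = ∑ y ∈ properFaces x, omegaS y := sum_congr rfl fun y hy => by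
      obtain ⟨hy, hyx⟩ := mem_properFaces.mp hy
      rw [properFaces_filter_ssubset hyx, ih y hyx hy]
    rw [altChainSum_eq_one_sub_chiChains, chiChains_eq_sum_below, hfaces,
      sum_omegaS_properFaces hx, omegaS_eq_neg_neg_one_pow hx]
    ring

lemma IsComplex.filter_ssubset_eq_properFaces {G : Finset (Finset α)} (hG : IsComplex G)
    {x : Finset α} (hx : x ∈ G) : G.filter (· ⊂ x) = properFaces x := by
  ext y
  rw [mem_filter, mem_properFaces]
  exact ⟨fun ⟨hy, hyx⟩ => ⟨hG.1 y hy, hyx⟩, fun ⟨hy, hyx⟩ => ⟨hG.2 x hx y hy hyx.subset, hyx⟩⟩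

lemma IsComplex.altChainSum_filter_ssubset {G : Finset (Finset α)} (hG : IsComplex G)
    {x : Finset α} (hx : x ∈ G) : altChainSum (G.filter (· ⊂ x)) = omegaS x := by
  rw [hG.filter_ssubset_eq_properFaces hx, altChainSum_properFaces (hG.1 x hx)]

lemma altChainSum_sphere (G : Finset (Finset α)) (x : Finset α) :
    altChainSum (sphere G x) =
      altChainSum (G.filter (· ⊂ x)) * altChainSum (G.filter (x ⊂ ·)) := by
  rw [sphere, filter_or]
  exact altChainSum_union fun a ha b hb => (mem_filter.mp ha).2.trans (mem_filter.mp hb).2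

/-- For any simplicial complex, ∑_{x∈G} ω(x)·χ(S(x)) = 0. -/
theorem sum_omega_chi_sphere (G : Finset (Finset α)) (hG : IsComplex G) :
    ∑ x ∈ G, omegaS x * chiChains (sphere G x) = 0 := by
  have hterm : ∀ x ∈ G,
      omegaS x * chiChains (sphere G x) = omegaS x - altChainSum (G.filter (x ⊂ ·)) := by
    intro x hx
    have hchi : chiChains (sphere G x) = 1 - altChainSum (sphere G x) := by
      rw [altChainSum_eq_one_sub_chiChains, sub_sub_cancel]
    rw [hchi, altChainSum_sphere, hG.altChainSum_filter_ssubset hx, mul_sub, ← mul_assoc,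
      omegaS_mul_self, mul_one, one_mul]
  have hbelow : ∑ x ∈ G, omegaS x = chiChains G := by
    rw [chiChains_eq_sum_below]
    exact sum_congr rfl fun x hx => (hG.altChainSum_filter_ssubset hx).symm
  rw [sum_congr rfl hterm, sum_sub_distrib, hbelow, ← chiChains_eq_sum_above, sub_self]
end

section
/- Let G be a finite abstract simplicial complex. For every x ∈ G, ∑_{y∈G, y∩x≠∅} ω(y)·χ(W⁺(y)) = 1, where the sum is over all simplices y of G intersecting x (including x itself). Equivalently, the vector k(y) = ω(y)·χ(W⁺(y)) solves L k = 1 for the connection matrix L. -/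
open Finset BigOperators

variable {α : Type*} [DecidableEq α]

/-- Euler characteristic of any finite collection of finite sets. -/
def chi (G : Finset (Finset α)) : ℤ := ∑ x ∈ G, omegaS x

/-- The star W⁺(x) = { y ∈ G : x ⊆ y } of x in G. -/
def star' (G : Finset (Finset α)) (x : Finset α) : Finset (Finset α) :=
  G.filter (fun y => x ⊆ y)

/-- Sum of ω over nonempty subsets of s. -/
lemma sum_omega_nonempty_subsets (s : Finset α) :
    ∑ t ∈ s.powerset.filter (fun t => t.Nonempty), omegaS t =
      if s = ∅ then 0 else 1 := by
  have h := Finset.sum_powerset_neg_one_pow_card (x := s)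
  have hsplit := Finset.sum_filter_add_sum_filter_not s.powerset
    (fun t => t.Nonempty) (fun t => (-1 : ℤ) ^ t.card)
  have h2 : s.powerset.filter (fun t => ¬ t.Nonempty) = {∅} := by
    ext t
    simp only [Finset.mem_filter, Finset.mem_powerset,
      Finset.not_nonempty_iff_eq_empty, Finset.mem_singleton]
    constructor
    · tauto
    · rintro rfl; exact ⟨Finset.empty_subset s, rfl⟩
  have hneg : ∑ t ∈ s.powerset.filter (fun t => t.Nonempty), (-1 : ℤ) ^ t.card
      = - ∑ t ∈ s.powerset.filter (fun t => t.Nonempty), omegaS t := by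
    rw [← Finset.sum_neg_distrib]
    refine Finset.sum_congr rfl fun t ht => ?_
    have htne : t.Nonempty := (Finset.mem_filter.1 ht).2
    have hc : t.card - 1 + 1 = t.card := Nat.succ_pred_eq_of_pos (Finset.card_pos.2 htne)
    have hp : ((-1 : ℤ)) ^ t.card = (-1) ^ (t.card - 1) * (-1) := by rw [← pow_succ, hc]
    rw [hp, omegaS]; ring
  rw [hneg, h2] at hsplit
  simp only [Finset.sum_singleton, Finset.card_empty, pow_zero] at hsplit
  rw [h] at hsplit
  by_cases hs : s = ∅ <;> simp [hs] at hsplit ⊢ <;> linarith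

/-- Sum of ω over subsets of z meeting x. -/
lemma sum_omega_meeting (z x : Finset α) (hz : z.Nonempty) :
    ∑ t ∈ z.powerset.filter (fun t => (t ∩ x).Nonempty), omegaS t =
      if z ⊆ x then 1 else 0 := by
  have hsplit := Finset.sum_filter_add_sum_filter_not
    (z.powerset.filter (fun t => t.Nonempty)) (fun t => (t ∩ x).Nonempty) omegaS
  rw [sum_omega_nonempty_subsets z, if_neg (Finset.nonempty_iff_ne_empty.1 hz)] at hsplit
  have e1 : (z.powerset.filter (fun t => t.Nonempty)).filter (fun t => (t ∩ x).Nonempty)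
      = z.powerset.filter (fun t => (t ∩ x).Nonempty) := by
    ext t
    simp only [Finset.mem_filter, Finset.mem_powerset]
    constructor
    · tauto
    · rintro ⟨h1, h2⟩
      exact ⟨⟨h1, h2.mono Finset.inter_subset_left⟩, h2⟩
  have e2 : (z.powerset.filter (fun t => t.Nonempty)).filter (fun t => ¬ (t ∩ x).Nonempty)
      = (z \ x).powerset.filter (fun t => t.Nonempty) := by
    ext t
    simp only [Finset.mem_filter, Finset.mem_powerset, Finset.not_nonempty_iff_eq_empty,
      Finset.subset_sdiff, ← Finset.disjoint_iff_inter_eq_empty]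
    tauto
  rw [e1, e2, sum_omega_nonempty_subsets (z \ x)] at hsplit
  have hsd : (z \ x) = ∅ ↔ z ⊆ x := Finset.sdiff_eq_empty_iff_subset
  by_cases hzx : z ⊆ x
  · rw [if_pos hzx]
    rw [if_pos (hsd.2 hzx)] at hsplit
    linarith
  · rw [if_neg hzx]
    rw [if_neg (fun h => hzx (hsd.1 h))] at hsplit
    linarith

/-- Unit ball lemma / L k = 1: for every x ∈ G,
∑_{y ∈ G, y∩x≠∅} ω(y)·χ(W⁺(y)) = 1. -/
theorem unit_ball_lemma (G : Finset (Finset α)) (hG : IsComplex G)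
    (x : Finset α) (hx : x ∈ G) :
    ∑ y ∈ G.filter (fun y => (y ∩ x).Nonempty), omegaS y * chi (star' G y) = 1 := by
  have key : ∀ y, omegaS y * chi (star' G y)
      = ∑ z ∈ G, if y ⊆ z then omegaS y * omegaS z else 0 := by
    intro y
    rw [chi, star', Finset.mul_sum, Finset.sum_filter]
  calc ∑ y ∈ G.filter (fun y => (y ∩ x).Nonempty), omegaS y * chi (star' G y)
      = ∑ y ∈ G, ∑ z ∈ G,
          if (y ∩ x).Nonempty ∧ y ⊆ z then omegaS y * omegaS z else 0 := by
        rw [Finset.sum_filter]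
        refine Finset.sum_congr rfl fun y _ => ?_
        by_cases hPy : (y ∩ x).Nonempty
        · rw [if_pos hPy, key y]
          exact Finset.sum_congr rfl fun z _ => by simp [hPy]
        · simp [hPy]
    _ = ∑ z ∈ G, ∑ y ∈ G,
          if (y ∩ x).Nonempty ∧ y ⊆ z then omegaS y * omegaS z else 0 :=
        Finset.sum_comm
    _ = ∑ z ∈ G, if z ⊆ x then omegaS z else 0 := by
        refine Finset.sum_congr rfl fun z hz => ?_
        have hzne : z.Nonempty := hG.1 z hz
        have hfe : G.filter (fun y => (y ∩ x).Nonempty ∧ y ⊆ z)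
            = z.powerset.filter (fun t => (t ∩ x).Nonempty) := by
          ext t
          simp only [Finset.mem_filter, Finset.mem_powerset]
          constructor
          · tauto
          · rintro ⟨h1, h2⟩
            exact ⟨hG.2 z hz t (h2.mono Finset.inter_subset_left) h1, h2, h1⟩
        have : ∑ y ∈ G, (if (y ∩ x).Nonempty ∧ y ⊆ z then omegaS y * omegaS z else 0)
            = (∑ t ∈ z.powerset.filter (fun t => (t ∩ x).Nonempty), omegaS t) * omegaS z := by
          rw [← hfe, Finset.sum_mul, ← Finset.sum_filter]
        rw [this, sum_omega_meeting z x hzne]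
        split <;> simp
    _ = ∑ t ∈ x.powerset.filter (fun t => t.Nonempty), omegaS t := by
        rw [← Finset.sum_filter]
        refine Finset.sum_congr ?_ fun _ _ => rfl
        ext t
        simp only [Finset.mem_filter, Finset.mem_powerset]
        constructor
        · rintro ⟨h1, h2⟩
          exact ⟨h2, hG.1 t h1⟩
        · rintro ⟨h1, h2⟩
          exact ⟨hG.2 x hx t h2 h1, h1⟩
    _ = 1 := by
        rw [sum_omega_nonempty_subsets x,
          if_neg (Finset.nonempty_iff_ne_empty.1 (hG.1 x hx))]
end

section
/- Poincaré–Hopf for graphs: let Γ be a finite simple graph and f a locally injective real-valued function on its vertices, i.e. f(u) ≠ f(v) whenever u and v are adjacent. Then χ(Γ) = ∑_{v} i_f(v), where i_f(v) = 1 - χ(S⁻_f(v)) and S⁻_f(v) is the subgraph of Γ induced on the set of neighbors w of v with f(w) < f(v). -/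
open Finset BigOperators

variable {V : Type*} [Fintype V] [DecidableEq V]

/-- The Euler characteristic of the subgraph of Γ induced on the vertices
satisfying P, computed via the Whitney (clique) complex:
∑ (-1)^(|s|-1) over all nonempty cliques s with all vertices in P. -/
def cliqueChi (Γ : SimpleGraph V) [DecidableRel Γ.Adj] (P : V → Prop)
    [DecidablePred P] : ℤ :=
  ∑ s ∈ Finset.univ.filter (fun s : Finset V =>
      s.Nonempty ∧ (∀ v ∈ s, P v) ∧ ∀ a ∈ s, ∀ b ∈ s, a ≠ b → Γ.Adj a b),
    (-1) ^ (s.card - 1)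

private lemma neg_one_pow_card' {t : Finset V} (ht : t.Nonempty) :
    ((-1 : ℤ)) ^ t.card = -(-1 : ℤ) ^ (t.card - 1) := by
  obtain ⟨n, hn⟩ : ∃ n, t.card = n + 1 :=
    ⟨t.card - 1, (Nat.succ_pred_eq_of_pos (Finset.card_pos.mpr ht)).symm⟩
  simp [hn, pow_succ]

/-- Poincaré–Hopf for graphs: if f is locally injective on a finite simple
graph Γ, then χ(Γ) = ∑_v i_f(v), where i_f(v) = 1 - χ(S⁻_f(v)) and S⁻_f(v) is
the subgraph induced on the neighbors w of v with f(w) < f(v). -/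
theorem poincare_hopf (Γ : SimpleGraph V) [DecidableRel Γ.Adj] (f : V → ℝ)
    (hf : ∀ u v : V, Γ.Adj u v → f u ≠ f v) :
    cliqueChi Γ (fun _ => True) =
      ∑ v : V, (1 - cliqueChi Γ (fun w => Γ.Adj v w ∧ f w < f v)) := by
  classical
  -- the index of a vertex: sum over cliques whose f-maximum is v
  have key : ∀ v : V,
      (∑ s ∈ Finset.univ.filter (fun s : Finset V =>
          (s.Nonempty ∧ (∀ a ∈ s, True) ∧ ∀ a ∈ s, ∀ b ∈ s, a ≠ b → Γ.Adj a b) ∧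
          v ∈ s ∧ ∀ w ∈ s, w ≠ v → f w < f v),
        ((-1 : ℤ)) ^ (s.card - 1))
      = 1 - cliqueChi Γ (fun w => Γ.Adj v w ∧ f w < f v) := by
    intro v
    set C := Finset.univ.filter (fun t : Finset V =>
      t.Nonempty ∧ (∀ w ∈ t, Γ.Adj v w ∧ f w < f v) ∧
        ∀ a ∈ t, ∀ b ∈ t, a ≠ b → Γ.Adj a b) with hC
    have hstep : (∑ s ∈ Finset.univ.filter (fun s : Finset V =>
          (s.Nonempty ∧ (∀ a ∈ s, True) ∧ ∀ a ∈ s, ∀ b ∈ s, a ≠ b → Γ.Adj a b) ∧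
          v ∈ s ∧ ∀ w ∈ s, w ≠ v → f w < f v),
        ((-1 : ℤ)) ^ (s.card - 1)) = ∑ t ∈ insert ∅ C, ((-1 : ℤ)) ^ t.card := by
      refine Finset.sum_nbij' (fun s => s.erase v) (fun t => insert v t) ?_ ?_ ?_ ?_ ?_
      · intro s hs
        simp only [Finset.mem_filter, Finset.mem_univ, true_and] at hs
        obtain ⟨⟨hne, -, hcl⟩, hv, hmax⟩ := hs
        rcases Finset.eq_empty_or_nonempty (s.erase v) with he | he
        · simp [he]
        · refine Finset.mem_insert_of_mem ?_
          simp only [hC, Finset.mem_filter, Finset.mem_univ, true_and]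
          refine ⟨he, ?_, ?_⟩
          · intro w hw
            obtain ⟨hwv, hws⟩ := Finset.mem_erase.mp hw
            exact ⟨(hcl w hws v hv hwv).symm, hmax w hws hwv⟩
          · intro a ha b hb hab
            exact hcl a (Finset.mem_of_mem_erase ha) b (Finset.mem_of_mem_erase hb) hab
      · intro t ht
        have hadj : ∀ w ∈ t, Γ.Adj v w ∧ f w < f v := by
          rcases Finset.mem_insert.mp ht with rfl | ht
          · intro w hw; exact absurd hw (Finset.notMem_empty w)
          · simp only [hC, Finset.mem_filter, Finset.mem_univ, true_and] at ht
            exact ht.2.1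
        have hcl : ∀ a ∈ t, ∀ b ∈ t, a ≠ b → Γ.Adj a b := by
          rcases Finset.mem_insert.mp ht with rfl | ht
          · intro a ha; exact absurd ha (Finset.notMem_empty a)
          · simp only [hC, Finset.mem_filter, Finset.mem_univ, true_and] at ht
            exact ht.2.2
        simp only [Finset.mem_filter, Finset.mem_univ, true_and]
        refine ⟨⟨⟨v, Finset.mem_insert_self v t⟩, fun _ _ => trivial, ?_⟩,
          Finset.mem_insert_self v t, ?_⟩
        · intro a ha b hb hab
          rcases Finset.mem_insert.mp ha with ha | ha
          · rcases Finset.mem_insert.mp hb with hb | hb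
            · exact absurd (ha.trans hb.symm) hab
            · exact ha ▸ (hadj b hb).1
          · rcases Finset.mem_insert.mp hb with hb | hb
            · exact hb ▸ ((hadj a ha).1).symm
            · exact hcl a ha b hb hab
        · intro w hw hwv
          rcases Finset.mem_insert.mp hw with hw | hw
          · exact absurd hw hwv
          · exact (hadj w hw).2
      · intro s hs
        simp only [Finset.mem_filter, Finset.mem_univ, true_and] at hs
        exact Finset.insert_erase hs.2.1
      · intro t ht
        rcases Finset.mem_insert.mp ht with rfl | ht
        · simp
        · simp only [hC, Finset.mem_filter, Finset.mem_univ, true_and] at ht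
          exact Finset.erase_insert (fun h => Γ.irrefl (ht.2.1 v h).1)
      · intro s hs
        simp only [Finset.mem_filter, Finset.mem_univ, true_and] at hs
        rw [Finset.card_erase_of_mem hs.2.1]
    rw [hstep]
    have hemp : (∅ : Finset V) ∉ C := by
      simp [hC]
    rw [Finset.sum_insert hemp]
    have : ∑ t ∈ C, ((-1 : ℤ)) ^ t.card = -∑ t ∈ C, ((-1 : ℤ)) ^ (t.card - 1) := by
      rw [← Finset.sum_neg_distrib]
      refine Finset.sum_congr rfl ?_
      intro t ht
      simp only [hC, Finset.mem_filter] at ht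
      exact neg_one_pow_card' ht.2.1
    rw [this]
    simp only [cliqueChi, hC]
    simp only [Finset.card_empty, pow_zero]
    ring
  -- now the double counting
  have huniq : ∀ s ∈ Finset.univ.filter (fun s : Finset V =>
      s.Nonempty ∧ (∀ a ∈ s, True) ∧ ∀ a ∈ s, ∀ b ∈ s, a ≠ b → Γ.Adj a b),
      (∑ v : V, if v ∈ s ∧ ∀ w ∈ s, w ≠ v → f w < f v
        then ((-1 : ℤ)) ^ (s.card - 1) else 0) = ((-1 : ℤ)) ^ (s.card - 1) := by
    intro s hs
    simp only [Finset.mem_filter, Finset.mem_univ, true_and] at hs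
    obtain ⟨hne, -, hcl⟩ := hs
    obtain ⟨v₀, hv₀, hmax⟩ := Finset.exists_max_image s f hne
    have hstrict : ∀ w ∈ s, w ≠ v₀ → f w < f v₀ := by
      intro w hw hwv
      exact lt_of_le_of_ne (hmax w hw) (hf w v₀ (hcl w hw v₀ hv₀ hwv))
    rw [Finset.sum_eq_single_of_mem v₀ (Finset.mem_univ v₀)]
    · rw [if_pos ⟨hv₀, hstrict⟩]
    · intro v _ hv
      rw [if_neg]
      rintro ⟨hvs, hvmax⟩
      exact lt_asymm (hvmax v₀ hv₀ (fun h => hv h.symm)) (hstrict v hvs hv)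
  calc cliqueChi Γ (fun _ => True)
      = ∑ s ∈ Finset.univ.filter (fun s : Finset V =>
          s.Nonempty ∧ (∀ a ∈ s, True) ∧ ∀ a ∈ s, ∀ b ∈ s, a ≠ b → Γ.Adj a b),
          ∑ v : V, (if v ∈ s ∧ ∀ w ∈ s, w ≠ v → f w < f v
            then ((-1 : ℤ)) ^ (s.card - 1) else 0) := by
        rw [cliqueChi]
        exact (Finset.sum_congr rfl huniq).symm
    _ = ∑ v : V, ∑ s ∈ Finset.univ.filter (fun s : Finset V =>
          s.Nonempty ∧ (∀ a ∈ s, True) ∧ ∀ a ∈ s, ∀ b ∈ s, a ≠ b → Γ.Adj a b),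
          (if v ∈ s ∧ ∀ w ∈ s, w ≠ v → f w < f v
            then ((-1 : ℤ)) ^ (s.card - 1) else 0) := Finset.sum_comm
    _ = ∑ v : V, (1 - cliqueChi Γ (fun w => Γ.Adj v w ∧ f w < f v)) := by
        refine Finset.sum_congr rfl ?_
        intro v _
        rw [← Finset.sum_filter, Finset.filter_filter]
        exact key v
end

section
/- Levitt's Gauss–Bonnet formula: let G be a finite abstract simplicial complex with vertex set V (the set of points v such that {v} ∈ G). Define the curvature of a vertex v by K(v) = ∑_{x∈G, v∈x} ω(x)/|x| (a rational number). Then ∑_{v∈V} K(v) = χ(G). -/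
open Finset BigOperators

variable {α : Type*} [DecidableEq α] [Fintype α]

/-- Levitt curvature of a vertex: K(v) = ∑_{x∈G, v∈x} ω(x)/|x|. -/
def levittCurv (G : Finset (Finset α)) (v : α) : ℚ :=
  ∑ x ∈ G.filter (fun x => v ∈ x), (omegaS x : ℚ) / (x.card : ℚ)

/-- Each nonempty set `x` of the family shares its weight `f x` equally among its `|x|`
elements, so redistributing the shares over the points gives back the total weight. -/
theorem sum_sum_filter_mem_div_card {β K : Type*} [DecidableEq β] [Field K] [CharZero K]
    (G : Finset (Finset β)) (V : Finset β) (hV : ∀ x ∈ G, x ⊆ V) (hne : ∀ x ∈ G, x.Nonempty)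
    (f : Finset β → K) :
    ∑ v ∈ V, ∑ x ∈ G with v ∈ x, f x / x.card = ∑ x ∈ G, f x := by
  rw [sum_comm' (t' := G) (s' := fun x => V.filter (· ∈ x))
    (fun v x => by simp only [mem_filter]; tauto)]
  refine sum_congr rfl fun x hx => ?_
  have hcard : (x.card : K) ≠ 0 := Nat.cast_ne_zero.mpr (hne x hx).card_pos.ne'
  rw [sum_const, filter_mem_eq_inter, inter_eq_right.mpr (hV x hx), nsmul_eq_mul,
    mul_div_cancel₀ _ hcard]

theorem IsComplex.subset_vertices {G : Finset (Finset α)} (hG : IsComplex G) {x : Finset α}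
    (hx : x ∈ G) : x ⊆ univ.filter (fun v : α => {v} ∈ G) := fun v hv =>
  mem_filter.mpr ⟨mem_univ v, hG.2 x hx {v} (singleton_nonempty v) (singleton_subset_iff.mpr hv)⟩

/-- Levitt's Gauss–Bonnet formula: the curvatures of the vertices
(the points v with {v} ∈ G) add up to the Euler characteristic. -/
theorem levitt_gauss_bonnet (G : Finset (Finset α)) (hG : IsComplex G) :
    ∑ v ∈ Finset.univ.filter (fun v : α => {v} ∈ G), levittCurv G v
      = (chi G : ℚ) := by
  rw [chi, Int.cast_sum]
  exact sum_sum_filter_mem_div_card G _ (fun _ => hG.subset_vertices) hG.1 _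
end

section
/- Complete complex lemma: let u be a nonempty finite set and let G be the complete complex on u, consisting of all nonempty subsets of u. Then for every x ∈ G, ∑_{z∈G, z∩x≠∅} ω(x)·ω(z)·ω(u) equals 1 if x = u and equals 0 if x ≠ u. -/
open Finset BigOperators

variable {α : Type*} [DecidableEq α]

/-- The complete complex on a nonempty finite set u: all nonempty subsets. -/
def completeComplex (u : Finset α) : Finset (Finset α) :=
  u.powerset.filter (fun x => x.Nonempty)

lemma sum_omegaS (v : Finset α) :
    ∑ z ∈ completeComplex v, omegaS z = if v.Nonempty then 1 else 0 := by
  have hsplit : ∑ z ∈ v.powerset, (-1 : ℤ) ^ z.card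
      = ∑ z ∈ completeComplex v, (-1 : ℤ) ^ z.card + 1 := by
    rw [completeComplex]
    rw [← Finset.sum_filter_add_sum_filter_not v.powerset (fun z => z.Nonempty)]
    congr 1
    have : v.powerset.filter (fun z => ¬ z.Nonempty) = {∅} := by
      ext z
      simp only [mem_filter, mem_powerset, Finset.not_nonempty_iff_eq_empty, mem_singleton]
      constructor
      · exact fun h => h.2
      · rintro rfl; exact ⟨empty_subset v, rfl⟩
    rw [this]; simp
  have hcc : ∀ z ∈ completeComplex v, omegaS z = -(-1 : ℤ) ^ z.card := by
    intro z hz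
    simp only [completeComplex, mem_filter] at hz
    obtain ⟨hn⟩ := hz.2
    have hc : z.card ≠ 0 := by
      simp [Finset.card_eq_zero, ← Finset.nonempty_iff_ne_empty.symm,
        Finset.nonempty_iff_ne_empty.mp hz.2]
    have : z.card = (z.card - 1) + 1 := (Nat.succ_pred_eq_of_pos (Nat.pos_of_ne_zero hc)).symm
    rw [omegaS]
    conv_rhs => rw [this, pow_succ]
    ring
  rw [Finset.sum_congr rfl hcc, Finset.sum_neg_distrib]
  have := hsplit
  by_cases hv : v.Nonempty
  · rw [Finset.sum_powerset_neg_one_pow_card_of_nonempty hv] at this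
    simp [hv]; linarith
  · rw [Finset.not_nonempty_iff_eq_empty] at hv
    subst hv
    simp [completeComplex, Finset.filter_singleton]

/-- Complete complex lemma: for the complete complex G on u and any x ∈ G,
∑_{z∈G, z∩x≠∅} ω(x)·ω(z)·ω(u) = 1 if x = u and 0 otherwise. -/
theorem complete_complex_lemma (u : Finset α) (hu : u.Nonempty)
    (x : Finset α) (hx : x ∈ completeComplex u) :
    ∑ z ∈ (completeComplex u).filter (fun z => (z ∩ x).Nonempty),
        omegaS x * omegaS z * omegaS u
      = if x = u then 1 else 0 := by
  simp only [completeComplex, mem_filter, mem_powerset] at hx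
  obtain ⟨hxu, hxne⟩ := hx
  have key : ∑ z ∈ (completeComplex u).filter (fun z => (z ∩ x).Nonempty), omegaS z
      = 1 - (if (u \ x).Nonempty then 1 else 0) := by
    have hdisj : (completeComplex u).filter (fun z => ¬ (z ∩ x).Nonempty)
        = completeComplex (u \ x) := by
      ext z
      simp only [completeComplex, mem_filter, mem_powerset, Finset.not_nonempty_iff_eq_empty,
        Finset.subset_sdiff, ← Finset.disjoint_iff_inter_eq_empty]
      tauto
    have := Finset.sum_filter_add_sum_filter_not (completeComplex u)
      (fun z => (z ∩ x).Nonempty) omegaS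
    rw [hdisj, sum_omegaS] at this
    rw [sum_omegaS u, if_pos hu] at this
    linarith [this]
  have hsum : ∑ z ∈ (completeComplex u).filter (fun z => (z ∩ x).Nonempty),
      omegaS x * omegaS z * omegaS u
      = omegaS x * omegaS u * ∑ z ∈ (completeComplex u).filter (fun z => (z ∩ x).Nonempty),
        omegaS z := by
    rw [Finset.mul_sum]; apply Finset.sum_congr rfl; intros; ring
  rw [hsum, key]
  by_cases hxeq : x = u
  · subst hxeq
    simp only [Finset.sdiff_self, Finset.not_nonempty_empty, if_neg, if_pos rfl]
    have : omegaS x * omegaS x = 1 := by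
      rw [omegaS, ← pow_add]
      exact Even.neg_one_pow ⟨_, rfl⟩
    simp [this]
  · rw [if_neg hxeq]
    have : (u \ x).Nonempty := by
      rw [Finset.sdiff_nonempty]
      intro h
      exact hxeq (Finset.Subset.antisymm hxu h)
    rw [if_pos this]
    ring
end

section
/- Wu characteristic of a complete complex: let u be a nonempty finite set and G the complete complex on u, consisting of all nonempty subsets of u. Then the Wu characteristic ω(G) = ∑_{x,z∈G, x∩z≠∅} ω(x)·ω(z) equals ω(u) = (-1)^(|u|-1). -/
open Finset BigOperators

variable {α : Type*} [DecidableEq α]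

lemma omegaS_eq (x : Finset α) (hx : x.Nonempty) : omegaS x = -(-1 : ℤ) ^ x.card := by
  obtain ⟨k, hk⟩ : ∃ k, x.card = k + 1 :=
    ⟨x.card - 1, (Nat.succ_pred_eq_of_pos (Finset.card_pos.mpr hx)).symm⟩
  simp [omegaS, hk, pow_succ]

lemma sum_omega (u : Finset α) (hu : u.Nonempty) :
    ∑ x ∈ completeComplex u, omegaS x = 1 := by
  have h0 : ∑ x ∈ u.powerset, (-(-1 : ℤ) ^ x.card) = 0 := by
    rw [Finset.sum_neg_distrib, Finset.sum_powerset_neg_one_pow_card]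
    simp [hu.ne_empty]
  have hsplit := Finset.sum_filter_add_sum_filter_not u.powerset (fun x => x.Nonempty)
      (fun x => -(-1 : ℤ) ^ x.card)
  have h1 : ∑ x ∈ completeComplex u, omegaS x
      = ∑ x ∈ u.powerset.filter (fun x => x.Nonempty), (-(-1 : ℤ) ^ x.card) := by
    apply Finset.sum_congr rfl
    intro x hx
    exact omegaS_eq x (Finset.mem_filter.mp hx).2
  have h2 : u.powerset.filter (fun x => ¬ x.Nonempty) = {∅} := by
    ext z
    simp [Finset.not_nonempty_iff_eq_empty]
    intro h; subst h; exact Finset.empty_subset u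
  rw [h2] at hsplit
  simp only [Finset.sum_singleton, Finset.card_empty, pow_zero] at hsplit
  rw [h0] at hsplit
  rw [h1]
  linarith

lemma disj_filter (u x : Finset α) :
    (completeComplex u).filter (fun z => ¬ (x ∩ z).Nonempty) = completeComplex (u \ x) := by
  ext z
  simp only [completeComplex, Finset.mem_filter, Finset.mem_powerset,
    Finset.not_nonempty_iff_eq_empty, Finset.subset_sdiff]
  constructor
  · rintro ⟨⟨h1, h2⟩, h3⟩
    exact ⟨⟨h1, Finset.disjoint_left.mpr fun a ha hax =>
      (Finset.eq_empty_iff_forall_notMem.mp h3 a) (Finset.mem_inter.mpr ⟨hax, ha⟩)⟩, h2⟩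
  · rintro ⟨⟨h1, hd⟩, h2⟩
    refine ⟨⟨h1, h2⟩, ?_⟩
    rw [Finset.eq_empty_iff_forall_notMem]
    intro a ha
    rw [Finset.mem_inter] at ha
    exact (Finset.disjoint_right.mp hd ha.1) ha.2

/-- Wu characteristic of the complete complex on u:
∑_{x,z∈G, x∩z≠∅} ω(x)·ω(z) = ω(u). -/
theorem wu_characteristic_complete (u : Finset α) (hu : u.Nonempty) :
    ∑ x ∈ completeComplex u,
      ∑ z ∈ (completeComplex u).filter (fun z => (x ∩ z).Nonempty),
        omegaS x * omegaS z
      = omegaS u := by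
  have hS := sum_omega u hu
  have key : ∀ x ∈ completeComplex u,
      ∑ z ∈ (completeComplex u).filter (fun z => (x ∩ z).Nonempty), omegaS x * omegaS z
        = if x = u then omegaS u else 0 := by
    intro x hx
    simp only [completeComplex, Finset.mem_filter, Finset.mem_powerset] at hx
    rw [← Finset.mul_sum]
    have hsplit := Finset.sum_filter_add_sum_filter_not (completeComplex u)
        (fun z => (x ∩ z).Nonempty) (fun z => omegaS z)
    rw [disj_filter] at hsplit
    by_cases hxu : x = u
    · subst hxu
      have : completeComplex (x \ x) = ∅ := by
        rw [Finset.sdiff_self, Finset.eq_empty_iff_forall_notMem]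
        intro z hz
        simp only [completeComplex, Finset.mem_filter, Finset.mem_powerset,
          Finset.subset_empty] at hz
        exact hz.2.ne_empty hz.1
      rw [this, Finset.sum_empty, add_zero] at hsplit
      rw [hsplit, hS, if_pos rfl, mul_one]
    · have hne : (u \ x).Nonempty := by
        rw [Finset.sdiff_nonempty]
        intro h
        exact hxu (Finset.Subset.antisymm hx.1 h)
      rw [sum_omega _ hne] at hsplit
      rw [hS] at hsplit
      have : ∑ z ∈ (completeComplex u).filter (fun z => (x ∩ z).Nonempty), omegaS z = 0 := by
        linarith
      rw [this, mul_zero, if_neg hxu]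
  rw [Finset.sum_congr rfl key]
  rw [Finset.sum_ite_eq' (completeComplex u) u (fun _ => omegaS u)]
  have : u ∈ completeComplex u := by
    simp [completeComplex, hu]
  rw [if_pos this]
end
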